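/- There is a bijection between Schröder trees with n leaves and well-weighted binary plane trees with n leaves, for every n ≥ 1; in particular the two sets are equinumerous. -/

import Mathlib

/-- A Schröder tree: a single node, or a root with at least two ordered subtrees,
encoded as two subtrees plus a (possibly empty) list of further subtrees. -/
inductive SchTree : Type
  | leaf : SchTree
  | node : SchTree → SchTree → List SchTree → SchTree

mutual
/-- Number of leaves of a Schröder tree. -/
def SchTree.leaves : SchTree → ℕ
  | .leaf => 1
  | .node t₁ t₂ ts => t₁.leaves + t₂.leaves + SchTree.leavesList ts
def SchTree.leavesList : List SchTree → ℕ
  | [] => 0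
  | t :: ts => t.leaves + SchTree.leavesList ts
end

/-- The number of Schröder trees with `n` leaves. -/
noncomputable def schS (n : ℕ) : ℕ := Nat.card {t : SchTree // t.leaves = n}

/-- A weighted binary plane tree: a leaf or a root with weight `r` and two subtrees. -/
inductive WTree : Type
  | leaf : WTree
  | node : ℕ → WTree → WTree → WTree

/-- Number of leaves. -/
def WTree.leaves : WTree → ℕ
  | .leaf => 1
  | .node _ t₁ t₂ => t₁.leaves + t₂.leaves

/-- Well-weighted: each weight is 1 or 2, and weight 2 forbids a right son which is a leaf. -/
def WTree.wellWeighted : WTree → Prop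
  | .leaf => True
  | .node r t₁ t₂ => (r = 1 ∨ r = 2) ∧ (t₂ = .leaf → r = 1) ∧ t₁.wellWeighted ∧ t₂.wellWeighted

/-- The number of well-weighted binary trees with `n` leaves. -/
noncomputable def wwS (n : ℕ) : ℕ :=
  Nat.card {t : WTree // t.wellWeighted ∧ t.leaves = n}

/-! The map `Φ` reads a Schröder node with children `t₁, …, t_l` as the right comb
`[2; t₁, [2; t₂, … [1; t_{l-1}, t_l]]]`: the weight `1` marks the last binary node of a comb.
Its inverse therefore reads a weight-`1` node as a fresh Schröder node with two children and a
weight-`2` node as "prepend the left subtree to the children of the right subtree"; the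
condition that a weight-`2` node has a non-leaf right son is exactly what makes this possible. -/

/-- `Φ` in the notation of the paper. -/
def SchTree.toWTree : SchTree → WTree
  | .leaf => .leaf
  | .node t₁ t₂ [] => .node 1 t₁.toWTree t₂.toWTree
  | .node t₁ t₂ (t :: ts) => .node 2 t₁.toWTree (SchTree.node t₂ t ts).toWTree
  termination_by t => sizeOf t
  decreasing_by all_goals simp only [SchTree.node.sizeOf_spec, List.cons.sizeOf_spec]; omega

def SchTree.consChild (a : SchTree) : SchTree → SchTree
  | .leaf => .node a .leaf []
  | .node u v ts => .node a u (v :: ts)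

def WTree.toSchTree : WTree → SchTree
  | .leaf => .leaf
  | .node r a b =>
      if r = 1 then .node a.toSchTree b.toSchTree [] else SchTree.consChild a.toSchTree b.toSchTree

namespace SchTree

theorem leaves_consChild (a t : SchTree) : (consChild a t).leaves = a.leaves + t.leaves := by
  cases t with
  | leaf => simp only [consChild, leaves, leavesList]
  | node u v ts => simp only [consChild, leaves, leavesList]; omega

theorem consChild_node (a u v : SchTree) (ts : List SchTree) :
    consChild a (node u v ts) = node a u (v :: ts) := rfl

theorem toWTree_node_ne_leaf (t₁ t₂ : SchTree) (ts : List SchTree) :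
    (node t₁ t₂ ts).toWTree ≠ .leaf := by
  cases ts <;> simp [toWTree]

theorem leaves_toWTree (t : SchTree) : t.toWTree.leaves = t.leaves := by
  induction t using toWTree.induct with
  | case1 => simp [toWTree, WTree.leaves, leaves]
  | case2 t₁ t₂ ih₁ ih₂ => simp [toWTree, WTree.leaves, leaves, leavesList, ih₁, ih₂]
  | case3 t₁ t₂ t ts ih₁ ih₂ =>
    simp only [toWTree, WTree.leaves, leaves, leavesList, ih₁, ih₂]
    omega

theorem wellWeighted_toWTree (t : SchTree) : t.toWTree.wellWeighted := by
  induction t using toWTree.induct with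
  | case1 => simp [toWTree, WTree.wellWeighted]
  | case2 t₁ t₂ ih₁ ih₂ => simpa [toWTree, WTree.wellWeighted] using ⟨ih₁, ih₂⟩
  | case3 t₁ t₂ t ts ih₁ ih₂ =>
    rw [toWTree]
    exact ⟨Or.inr rfl, fun h => absurd h (toWTree_node_ne_leaf _ _ _), ih₁, ih₂⟩

theorem toSchTree_toWTree (t : SchTree) : t.toWTree.toSchTree = t := by
  induction t using toWTree.induct with
  | case1 => simp [toWTree, WTree.toSchTree]
  | case2 t₁ t₂ ih₁ ih₂ => simp [toWTree, WTree.toSchTree, ih₁, ih₂]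
  | case3 t₁ t₂ t ts ih₁ ih₂ => simp [toWTree, WTree.toSchTree, ih₁, ih₂, consChild_node]

end SchTree

namespace WTree

theorem toSchTree_node_ne_leaf (r : ℕ) (a b : WTree) : (node r a b).toSchTree ≠ .leaf := by
  unfold toSchTree
  split_ifs
  · simp
  · cases b.toSchTree <;> simp [SchTree.consChild]

theorem leaves_toSchTree (t : WTree) : t.toSchTree.leaves = t.leaves := by
  induction t with
  | leaf => rfl
  | node r a b iha ihb =>
    unfold toSchTree
    split_ifs
    · simp [SchTree.leaves, SchTree.leavesList, leaves, iha, ihb]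
    · rw [SchTree.leaves_consChild, iha, ihb, leaves]

theorem toWTree_toSchTree {t : WTree} (ht : t.wellWeighted) : t.toSchTree.toWTree = t := by
  induction t with
  | leaf => simp [toSchTree, SchTree.toWTree]
  | node r a b iha ihb =>
    obtain ⟨hr, hb_leaf, ha, hb⟩ := ht
    unfold toSchTree
    split_ifs with h1
    · simp [SchTree.toWTree, h1, iha ha, ihb hb]
    · have hr2 : r = 2 := hr.resolve_left h1
      -- the right son is not a leaf, so `consChild` really prepends a child
      obtain ⟨r', c, d, rfl⟩ : ∃ r' c d, b = node r' c d := by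
        cases b with
        | leaf => exact absurd (hb_leaf rfl) h1
        | node r' c d => exact ⟨r', c, d, rfl⟩
      obtain ⟨u, v, ts, huvts⟩ : ∃ u v ts, (node r' c d).toSchTree = .node u v ts := by
        cases h : (node r' c d).toSchTree with
        | leaf => exact absurd h (toSchTree_node_ne_leaf _ _ _)
        | node u v ts => exact ⟨u, v, ts, rfl⟩
      rw [huvts, SchTree.consChild_node, SchTree.toWTree, ← huvts, iha ha, ihb hb, hr2]

end WTree

def SchTree.equivWellWeightedOfLeaves (n : ℕ) :
    {t : SchTree // t.leaves = n} ≃ {t : WTree // t.wellWeighted ∧ t.leaves = n} where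
  toFun t := ⟨t.1.toWTree, t.1.wellWeighted_toWTree, by rw [t.1.leaves_toWTree, t.2]⟩
  invFun t := ⟨t.1.toSchTree, by rw [t.1.leaves_toSchTree, t.2.2]⟩
  left_inv t := Subtype.ext t.1.toSchTree_toWTree
  right_inv t := Subtype.ext (WTree.toWTree_toSchTree t.2.1)

/-- For every `n ≥ 1`, Schröder trees with `n` leaves are in bijection with
well-weighted binary trees with `n` leaves; in particular they are equinumerous. -/
theorem schroeder_equiv_wellWeighted (n : ℕ) (hn : 1 ≤ n) :
    Nonempty ({t : SchTree // t.leaves = n} ≃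
      {t : WTree // t.wellWeighted ∧ t.leaves = n}) ∧ schS n = wwS n :=
  ⟨⟨SchTree.equivWellWeightedOfLeaves n⟩, Nat.card_congr (SchTree.equivWellWeightedOfLeaves n)⟩
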